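/- arXiv:0812.5025 — 4 statements merged into one kernel-verified Lean document; each statement's English description precedes it below -/
import Mathlib

section
/- Let X and Y be real vector spaces and let f : X → Y be an even function (f(-x) = f(x) for all x) satisfying the functional equation f(2x+y) + f(2x-y) = 4(f(x+y) + f(x-y)) - (3/7)(f(2y) - 2f(y)) + 2f(2x) - 8f(x) for all x, y in X. Then f is a quartic function, i.e., f satisfies f(2x+y) + f(2x-y) = 4(f(x+y) + f(x-y)) + 24f(x) - 6f(y) for all x, y in X. -/
/-- The mixed quartic-additive functional equation (1.4):
`f(2x+y) + f(2x-y) = 4(f(x+y) + f(x-y)) - (3/7)(f(2y) - 2f(y)) + 2f(2x) - 8f(x)`. -/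
def MixedEq {X Y : Type*} [AddCommGroup X] [Module ℝ X] [AddCommGroup Y] [Module ℝ Y]
    (f : X → Y) : Prop :=
  ∀ x y : X,
    f ((2 : ℝ) • x + y) + f ((2 : ℝ) • x - y) =
      (4 : ℝ) • (f (x + y) + f (x - y))
        - ((3 : ℝ) / 7) • (f ((2 : ℝ) • y) - (2 : ℝ) • f y)
        + (2 : ℝ) • f ((2 : ℝ) • x) - (8 : ℝ) • f x

/-- The quartic functional equation (1.3):
`f(2x+y) + f(2x-y) = 4(f(x+y) + f(x-y)) + 24 f(x) - 6 f(y)`. -/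
def IsQuartic {X Y : Type*} [AddCommGroup X] [Module ℝ X] [AddCommGroup Y] [Module ℝ Y]
    (f : X → Y) : Prop :=
  ∀ x y : X,
    f ((2 : ℝ) • x + y) + f ((2 : ℝ) • x - y) =
      (4 : ℝ) • (f (x + y) + f (x - y)) + (24 : ℝ) • f x - (6 : ℝ) • f y

/-! Setting `x = 0` and using evenness forces `f (2y) = 16 f y`; with this, the terms
`-(3/7)(f(2y) - 2f(y)) + 2f(2x) - 8f(x)` of the mixed equation become `24 f x - 6 f y`. -/

namespace MixedEq

variable {X Y : Type*} [AddCommGroup X] [Module ℝ X] [AddCommGroup Y] [Module ℝ Y] {f : X → Y}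

theorem map_zero (hf : MixedEq f) : f 0 = 0 := by
  have h := hf 0 0
  simp only [smul_zero, add_zero, sub_self] at h
  linear_combination (norm := module) (-7 / 3 : ℝ) • h

theorem map_two_smul (hf : MixedEq f) (heven : ∀ x, f (-x) = f x) (y : X) :
    f ((2 : ℝ) • y) = (16 : ℝ) • f y := by
  have h := hf 0 y
  simp only [smul_zero, zero_add, zero_sub, heven, hf.map_zero] at h
  linear_combination (norm := module) (7 / 3 : ℝ) • h

end MixedEq

theorem even_solution_is_quartic {X Y : Type*} [AddCommGroup X] [Module ℝ X]
    [AddCommGroup Y] [Module ℝ Y] (f : X → Y)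
    (heven : ∀ x : X, f (-x) = f x) (hf : MixedEq f) :
    IsQuartic f := by
  intro x y
  have h := hf x y
  rw [hf.map_two_smul heven x, hf.map_two_smul heven y] at h
  linear_combination (norm := module) h
end

section
/- Let X and Y be real vector spaces and let f : X → Y satisfy the functional equation f(2x+y) + f(2x-y) = 4(f(x+y) + f(x-y)) - (3/7)(f(2y) - 2f(y)) + 2f(2x) - 8f(x) for all x, y in X. Then there exist a symmetric multi-additive function B : X × X × X × X → Y (additive in each variable separately and invariant under permutations of its arguments) and an additive function A : X → Y such that f(x) = B(x,x,x,x) + A(x) for all x in X. -/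
/-- `B : X × X × X × X → Y` is symmetric multi-additive: additive in each of its four
variables separately and invariant under every permutation of its arguments. -/
def SymmetricMultiAdditive {X Y : Type*} [AddCommGroup X] [AddCommGroup Y]
    (B : X × X × X × X → Y) : Prop :=
  (∀ a a' b c d : X, B (a + a', b, c, d) = B (a, b, c, d) + B (a', b, c, d)) ∧
  (∀ a b b' c d : X, B (a, b + b', c, d) = B (a, b, c, d) + B (a, b', c, d)) ∧
  (∀ a b c c' d : X, B (a, b, c + c', d) = B (a, b, c, d) + B (a, b, c', d)) ∧
  (∀ a b c d d' : X, B (a, b, c, d + d') = B (a, b, c, d) + B (a, b, c, d')) ∧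
  (∀ (σ : Equiv.Perm (Fin 4)) (v : Fin 4 → X),
    B (v (σ 0), v (σ 1), v (σ 2), v (σ 3)) = B (v 0, v 1, v 2, v 3))

/-!
Split `f` into its even part `q` and odd part `g`; both still solve the equation, and `x = 0`
gives `q (2x) = 16 q x` and `g (2x) = 2 g x`. Hence `q` is quartic.

For `q`, the parallelogram defect `A = parallelogramDefect q` is symmetric and multiplied by `4`
when either variable is doubled. Its own parallelogram defect in `x` is symmetric in all three
variables, so doubling two of them multiplies it both by `4` and by `16`: it vanishes. Thus every
`A · y` is a quadratic function, and polarizing it in both variables yields `B`.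

For `g`, the third Cauchy difference `J = thirdCauchyDefect g` satisfies
`J x y (2z) = 9/4 J x y z - 7/4 J x y (-z)`, and likewise in `x` and `y`. Doubling one variable
multiplies the part of `J` odd in that variable by `4` and the even part by `1/2`, so doubling all
three multiplies each parity component by one of `1/8, 1, 8, 64`; but `g (2x) = 2 g x` says that
it multiplies `J` by `2`. So `J = 0`, which makes `g` a solution of Jensen's equation, hence
additive.
-/

section Jensen

variable {X Y : Type*} [AddCommGroup X] [Module ℝ X] [AddCommGroup Y] [Module ℝ Y]

theorem map_add_of_jensen {F : X → Y} (h0 : F 0 = 0)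
    (hF : ∀ x y, F (x + y) + F (x - y) = (2 : ℝ) • F x) (x y : X) :
    F (x + y) = F x + F y := by
  have hdouble : ∀ u, F ((2 : ℝ) • u) = (2 : ℝ) • F u := fun u => by
    simpa [two_smul, h0] using hF u u
  have h := hF ((2 : ℝ)⁻¹ • (x + y)) ((2 : ℝ)⁻¹ • (x - y))
  rw [← hdouble, show (2 : ℝ) • (2 : ℝ)⁻¹ • (x + y) = x + y by module,
    show (2 : ℝ)⁻¹ • (x + y) + (2 : ℝ)⁻¹ • (x - y) = x by module,
    show (2 : ℝ)⁻¹ • (x + y) - (2 : ℝ)⁻¹ • (x - y) = y by module] at h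
  exact h.symm

end Jensen

section Quadratic

variable {X Y : Type*} [AddCommGroup X] [AddCommGroup Y] [Module ℝ Y]

def parallelogramDefect (Q : X → Y) (x y : X) : Y :=
  Q (x + y) + Q (x - y) - (2 : ℝ) • (Q x + Q y)

def IsQuadratic (Q : X → Y) : Prop :=
  ∀ x y, Q (x + y) + Q (x - y) = (2 : ℝ) • (Q x + Q y)

variable {Q : X → Y}

theorem isQuadratic_of_parallelogramDefect_eq_zero (h : ∀ x y, parallelogramDefect Q x y = 0) :
    IsQuadratic Q :=
  fun x y => sub_eq_zero.mp (h x y)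

theorem parallelogramDefect_comm (hQ : Q.Even) (x y : X) :
    parallelogramDefect Q x y = parallelogramDefect Q y x := by
  simp only [parallelogramDefect]
  rw [add_comm y x, ← neg_sub x y, hQ.eq, add_comm (Q y)]

theorem parallelogramDefect_neg_left (hQ : Q.Even) (x y : X) :
    parallelogramDefect Q (-x) y = parallelogramDefect Q x y := by
  simp only [parallelogramDefect]
  rw [neg_add_eq_sub, ← neg_sub x y, ← neg_add', hQ.eq, hQ.eq, hQ.eq, add_comm (Q (x - y))]

theorem parallelogramDefect_neg_right (hQ : Q.Even) (x y : X) :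
    parallelogramDefect Q x (-y) = parallelogramDefect Q x y := by
  rw [parallelogramDefect_comm hQ, parallelogramDefect_neg_left hQ, parallelogramDefect_comm hQ]

theorem parallelogramDefect_const_smul (c : ℝ) (x y : X) :
    parallelogramDefect (fun w => c • Q w) x y = c • parallelogramDefect Q x y := by
  simp only [parallelogramDefect]
  module

theorem parallelogramDefect_two_smul [Module ℝ X] {c : ℝ} (hQ : ∀ x, Q ((2 : ℝ) • x) = c • Q x)
    (x y : X) :
    parallelogramDefect Q ((2 : ℝ) • x) ((2 : ℝ) • y) = c • parallelogramDefect Q x y := by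
  simp only [parallelogramDefect]
  rw [← smul_add, ← smul_sub, hQ, hQ, hQ, hQ]
  module

theorem parallelogramDefect_parallelogramDefect_swap (hQ : Q.Even) (x y z : X) :
    parallelogramDefect (parallelogramDefect Q · y) x z =
      parallelogramDefect (parallelogramDefect Q · x) y z := by
  simp only [parallelogramDefect]
  rw [← hQ.eq (y + z - x), ← hQ.eq (y - z - x), ← hQ.eq (y - z), ← hQ.eq (y - x),
    ← hQ.eq (z - x)]
  abel_nf
  module

namespace IsQuadratic

theorem map_zero (hQ : IsQuadratic Q) : Q 0 = 0 := by
  have h := hQ 0 0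
  rw [add_zero, sub_zero] at h
  linear_combination (norm := module) (-(1 : ℝ) / 2) • h

theorem even (hQ : IsQuadratic Q) : Q.Even := fun x => by
  have h := hQ 0 x
  rw [zero_add, zero_sub, hQ.map_zero] at h
  linear_combination (norm := module) h

theorem polarization_add_left [Module ℝ X] (hQ : IsQuadratic Q) (a a' b : X) :
    Q (a + a' + b) - Q (a + a' - b) = (Q (a + b) - Q (a - b)) + (Q (a' + b) - Q (a' - b)) := by
  refine map_add_of_jensen (F := fun a => Q (a + b) - Q (a - b)) ?_ (fun a a' => ?_) a a'
  · simp only [zero_add, zero_sub, hQ.even.eq, sub_self]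
  · have h₁ := hQ (a + b) a'
    have h₂ := hQ (a - b) a'
    rw [show a + b + a' = a + a' + b by abel, show a + b - a' = a - a' + b by abel] at h₁
    rw [show a - b + a' = a + a' - b by abel, show a - b - a' = a - a' - b by abel] at h₂
    linear_combination (norm := module) h₁ - h₂

end IsQuadratic

end Quadratic

theorem symmetricMultiAdditive_of_add_left {X Y : Type*} [AddCommGroup X] [AddCommGroup Y]
    (F : X → X → X → X → Y) (hadd : ∀ a a' b c d, F (a + a') b c d = F a b c d + F a' b c d)
    (h₀₁ : ∀ a b c d, F a b c d = F b a c d) (h₁₂ : ∀ a b c d, F a b c d = F a c b d)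
    (h₂₃ : ∀ a b c d, F a b c d = F a b d c) :
    SymmetricMultiAdditive (fun p : X × X × X × X => F p.1 p.2.1 p.2.2.1 p.2.2.2) := by
  have hadd₁ : ∀ a b b' c d, F a (b + b') c d = F a b c d + F a b' c d := fun a b b' c d => by
    rw [h₀₁ a, hadd, h₀₁ b, h₀₁ b']
  have hadd₂ : ∀ a b c c' d, F a b (c + c') d = F a b c d + F a b c' d := fun a b c c' d => by
    rw [h₁₂ a b, hadd₁, h₁₂ a c, h₁₂ a c']
  have hadd₃ : ∀ a b c d d', F a b c (d + d') = F a b c d + F a b c d' := fun a b c d d' => by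
    rw [h₂₃ a b c, hadd₂, h₂₃ a b d, h₂₃ a b d']
  refine ⟨hadd, hadd₁, hadd₂, hadd₃, fun σ => ?_⟩
  have hσ : σ ∈ Submonoid.closure (Set.range fun i : Fin 3 => Equiv.swap i.castSucc i.succ) := by
    rw [Equiv.Perm.mclosure_swap_castSucc_succ]
    trivial
  induction hσ using Submonoid.closure_induction with
  | mem τ hτ =>
    obtain ⟨i, rfl⟩ := hτ
    intro v
    fin_cases i
    · exact (h₀₁ _ _ _ _).symm
    · exact (h₁₂ _ _ _ _).symm
    · exact (h₂₃ _ _ _ _).symm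
  | one => exact fun v => rfl
  | mul σ τ _ _ hσ hτ => exact fun v => (hτ (v ∘ σ)).trans (hσ v)

section Quartic

variable {X Y : Type*} [AddCommGroup X] [Module ℝ X] [AddCommGroup Y] [Module ℝ Y] {q : X → Y}

namespace IsQuartic

theorem map_zero (hq : IsQuartic q) : q 0 = 0 := by
  have h := hq 0 0
  simp only [smul_zero, add_zero, sub_zero] at h
  linear_combination (norm := module) (-(1 : ℝ) / 24) • h

theorem even (hq : IsQuartic q) : q.Even := fun x => by
  have h := hq 0 x
  simp only [smul_zero, zero_add, zero_sub, hq.map_zero] at h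
  linear_combination (norm := module) (-(1 : ℝ) / 3) • h

theorem map_two_smul (hq : IsQuartic q) (x : X) : q ((2 : ℝ) • x) = (16 : ℝ) • q x := by
  have h := hq x 0
  simp only [add_zero, sub_zero, hq.map_zero] at h
  linear_combination (norm := module) (1 / 2 : ℝ) • h

theorem parallelogramDefect_two_smul_left (hq : IsQuartic q) (x y : X) :
    parallelogramDefect q ((2 : ℝ) • x) y = (4 : ℝ) • parallelogramDefect q x y := by
  simp only [parallelogramDefect]
  rw [hq x y, hq.map_two_smul]
  module

theorem parallelogramDefect_two_smul_right (hq : IsQuartic q) (x y : X) :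
    parallelogramDefect q x ((2 : ℝ) • y) = (4 : ℝ) • parallelogramDefect q x y := by
  rw [parallelogramDefect_comm hq.even, hq.parallelogramDefect_two_smul_left,
    parallelogramDefect_comm hq.even]

theorem isQuadratic_parallelogramDefect (hq : IsQuartic q) (y : X) :
    IsQuadratic (parallelogramDefect q · y) := by
  set A : X → X → Y := parallelogramDefect q
  have hswap := parallelogramDefect_parallelogramDefect_swap hq.even
  have hcomm : ∀ y x z, parallelogramDefect (A · y) x z = parallelogramDefect (A · y) z x :=
    fun y => parallelogramDefect_comm fun x => parallelogramDefect_neg_left hq.even x y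
  have hscale : ∀ y x z, parallelogramDefect (A · y) ((2 : ℝ) • x) ((2 : ℝ) • z) =
      (4 : ℝ) • parallelogramDefect (A · y) x z :=
    fun y => parallelogramDefect_two_smul (hq.parallelogramDefect_two_smul_left · y)
  have hscale' : ∀ y x z, parallelogramDefect (A · ((2 : ℝ) • y)) x z =
      (4 : ℝ) • parallelogramDefect (A · y) x z := fun y x z => by
    simp only [A, hq.parallelogramDefect_two_smul_right]
    exact parallelogramDefect_const_smul 4 x z
  refine isQuadratic_of_parallelogramDefect_eq_zero fun x z => ?_
  have h : (4 : ℝ) • parallelogramDefect (A · y) x z =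
      (16 : ℝ) • parallelogramDefect (A · y) x z := calc
    _ = parallelogramDefect (A · y) ((2 : ℝ) • x) ((2 : ℝ) • z) := (hscale y x z).symm
    _ = parallelogramDefect (A · ((2 : ℝ) • x)) y ((2 : ℝ) • z) := hswap _ _ _
    _ = parallelogramDefect (A · ((2 : ℝ) • x)) ((2 : ℝ) • z) y := hcomm _ _ _
    _ = (4 : ℝ) • parallelogramDefect (A · x) ((2 : ℝ) • z) y := hscale' _ _ _
    _ = (4 : ℝ) • parallelogramDefect (A · ((2 : ℝ) • z)) x y := by rw [hswap]
    _ = (16 : ℝ) • parallelogramDefect (A · z) x y := by rw [hscale', smul_smul]; norm_num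
    _ = (16 : ℝ) • parallelogramDefect (A · y) z x := by rw [hcomm, hswap]
    _ = (16 : ℝ) • parallelogramDefect (A · y) x z := by rw [hcomm]
  linear_combination (norm := module) (-(1 : ℝ) / 12) • h

end IsQuartic

end Quartic

section QuarticPolar

variable {X Y : Type*} [AddCommGroup X] [AddCommGroup Y] [Module ℝ Y] {q : X → Y}

/-- Expanded, the bracket is `∑ ε₁ ε₂ ε₃ • q (a + ε₁ b + ε₂ c + ε₃ d)` over signs `εᵢ = ±1`; on the
diagonal it equals `q (4x) - 4 q (2x) = 192 q x` for a quartic `q`. -/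
noncomputable def quarticPolar (q : X → Y) (a b c d : X) : Y :=
  (192 : ℝ)⁻¹ • (parallelogramDefect q (a + d) (b + c) - parallelogramDefect q (a - d) (b + c)
    - (parallelogramDefect q (a + d) (b - c) - parallelogramDefect q (a - d) (b - c)))

theorem quarticPolar_swap₂₃ (a b c d : X) : quarticPolar q a b c d = quarticPolar q a b d c := by
  simp only [quarticPolar, parallelogramDefect]
  abel_nf
  module

theorem quarticPolar_swap₁₂ (hq : q.Even) (a b c d : X) :
    quarticPolar q a b c d = quarticPolar q a c b d := by
  simp only [quarticPolar]
  rw [add_comm c b, ← neg_sub b c, parallelogramDefect_neg_right hq,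
    parallelogramDefect_neg_right hq]

theorem quarticPolar_swap₀₁ (hq : q.Even) (a b c d : X) :
    quarticPolar q a b c d = quarticPolar q b a c d := by
  rw [quarticPolar_swap₂₃]
  simp only [quarticPolar]
  rw [parallelogramDefect_comm hq (a + c), parallelogramDefect_comm hq (a - c),
    parallelogramDefect_comm hq (a + c), parallelogramDefect_comm hq (a - c)]
  module

theorem IsQuartic.quarticPolar_add_left [Module ℝ X] (hq : IsQuartic q) (a a' b c d : X) :
    quarticPolar q (a + a') b c d = quarticPolar q a b c d + quarticPolar q a' b c d := by
  have hsum := (hq.isQuadratic_parallelogramDefect (b + c)).polarization_add_left a a' d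
  have hdiff := (hq.isQuadratic_parallelogramDefect (b - c)).polarization_add_left a a' d
  simp only [quarticPolar]
  rw [hsum, hdiff]
  module

theorem IsQuartic.quarticPolar_self [Module ℝ X] (hq : IsQuartic q) (x : X) :
    quarticPolar q x x x x = q x := by
  simp only [quarticPolar, parallelogramDefect, sub_self, zero_add, zero_sub, add_zero, sub_zero]
  rw [← two_smul ℝ x, ← two_smul ℝ ((2 : ℝ) • x)]
  simp only [hq.map_two_smul, hq.even.eq, hq.map_zero]
  module

theorem IsQuartic.exists_symmetricMultiAdditive [Module ℝ X] (hq : IsQuartic q) :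
    ∃ B : X × X × X × X → Y, SymmetricMultiAdditive B ∧ ∀ x, B (x, x, x, x) = q x :=
  ⟨_, symmetricMultiAdditive_of_add_left (quarticPolar q) hq.quarticPolar_add_left
    (quarticPolar_swap₀₁ hq.even) (quarticPolar_swap₁₂ hq.even) quarticPolar_swap₂₃,
    hq.quarticPolar_self⟩

end QuarticPolar

section Cauchy

variable {X Y : Type*} [AddCommGroup X] [AddCommGroup Y] {g : X → Y}

def thirdCauchyDefect (g : X → Y) (x y z : X) : Y :=
  g (x + y + z) - g (x + y) - g (x + z) - g (y + z) + g x + g y + g z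

theorem thirdCauchyDefect_comm₀₁ (x y z : X) :
    thirdCauchyDefect g x y z = thirdCauchyDefect g y x z := by
  simp only [thirdCauchyDefect]
  rw [add_comm y x]
  abel

theorem thirdCauchyDefect_comm₁₂ (x y z : X) :
    thirdCauchyDefect g x y z = thirdCauchyDefect g x z y := by
  simp only [thirdCauchyDefect]
  rw [add_right_comm x z y, add_comm z y]
  abel

theorem thirdCauchyDefect_neg (hodd : g.Odd) (x y z : X) :
    thirdCauchyDefect g (-x) (-y) (-z) = -thirdCauchyDefect g x y z := by
  simp only [thirdCauchyDefect, ← neg_add, hodd.eq]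
  abel

end Cauchy

section MixedEquation

variable {X Y : Type*} [AddCommGroup X] [Module ℝ X] [AddCommGroup Y] [Module ℝ Y] {f f' g : X → Y}

theorem thirdCauchyDefect_two_smul (h2 : ∀ x, g ((2 : ℝ) • x) = (2 : ℝ) • g x) (x y z : X) :
    thirdCauchyDefect g ((2 : ℝ) • x) ((2 : ℝ) • y) ((2 : ℝ) • z) =
      (2 : ℝ) • thirdCauchyDefect g x y z := by
  simp only [thirdCauchyDefect, ← smul_add, h2]
  module

namespace MixedEq

theorem comp_neg (hf : MixedEq f) : MixedEq (fun x => f (-x)) := by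
  intro x y
  convert hf (-x) (-y) using 3 <;> simp only [smul_neg] <;> abel_nf

theorem smul_add_smul (hf : MixedEq f) (hf' : MixedEq f') (a b : ℝ) :
    MixedEq (fun x => a • f x + b • f' x) := by
  intro x y
  linear_combination (norm := module) a • hf x y + b • hf' x y

theorem isQuartic_of_even (hf : MixedEq f) (heven : f.Even) : IsQuartic f := by
  have h0 : f 0 = 0 := by
    have h := hf 0 0
    simp only [smul_zero, add_zero, sub_zero] at h
    linear_combination (norm := module) (-(7 : ℝ) / 3) • h
  have h2 : ∀ x, f ((2 : ℝ) • x) = (16 : ℝ) • f x := fun x => by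
    have h := hf 0 x
    simp only [smul_zero, zero_add, zero_sub, heven.eq, h0] at h
    linear_combination (norm := module) (7 / 3 : ℝ) • h
  intro x y
  have h := hf x y
  rw [h2, h2] at h
  linear_combination (norm := module) h

theorem map_two_smul_of_odd (hg : MixedEq g) (hodd : g.Odd) (x : X) :
    g ((2 : ℝ) • x) = (2 : ℝ) • g x := by
  have : IsAddTorsionFree Y := .of_isTorsionFree ℝ Y
  have h := hg 0 x
  simp only [smul_zero, zero_add, zero_sub, hodd.eq, hodd.map_zero] at h
  linear_combination (norm := module) (7 / 3 : ℝ) • h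

theorem map_add_two_smul_of_odd (hg : MixedEq g) (hodd : g.Odd) (x y : X) :
    g (x + (2 : ℝ) • y) = (9 / 4 : ℝ) • g (x + y) - (7 / 4 : ℝ) • g (x - y)
      + (1 / 2 : ℝ) • g x - (2 : ℝ) • g y := by
  have h2 := hg.map_two_smul_of_odd hodd
  have hyx := hg y x
  rw [add_comm _ x, add_comm y x, ← neg_sub x, ← neg_sub x y, hodd.eq, hodd.eq, h2, h2] at hyx
  have hxy := hg x ((2 : ℝ) • y)
  rw [← smul_add, ← smul_sub] at hxy
  simp only [h2] at hxy
  linear_combination (norm := module) (1 / 2 : ℝ) • hyx - (1 / 8 : ℝ) • hxy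

theorem thirdCauchyDefect_two_smul₂ (hg : MixedEq g) (hodd : g.Odd) (x y z : X) :
    thirdCauchyDefect g x y ((2 : ℝ) • z) =
      (9 / 4 : ℝ) • thirdCauchyDefect g x y z - (7 / 4 : ℝ) • thirdCauchyDefect g x y (-z) := by
  have hK := hg.map_add_two_smul_of_odd hodd
  simp only [thirdCauchyDefect, ← sub_eq_add_neg, hK, hodd.eq, hg.map_two_smul_of_odd hodd]
  module

theorem thirdCauchyDefect_two_smul₁ (hg : MixedEq g) (hodd : g.Odd) (x y z : X) :
    thirdCauchyDefect g x ((2 : ℝ) • y) z =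
      (9 / 4 : ℝ) • thirdCauchyDefect g x y z - (7 / 4 : ℝ) • thirdCauchyDefect g x (-y) z := by
  simp only [thirdCauchyDefect_comm₁₂ x _ z, hg.thirdCauchyDefect_two_smul₂ hodd]

theorem thirdCauchyDefect_two_smul₀ (hg : MixedEq g) (hodd : g.Odd) (x y z : X) :
    thirdCauchyDefect g ((2 : ℝ) • x) y z =
      (9 / 4 : ℝ) • thirdCauchyDefect g x y z - (7 / 4 : ℝ) • thirdCauchyDefect g (-x) y z := by
  simp only [thirdCauchyDefect_comm₀₁ _ y z, hg.thirdCauchyDefect_two_smul₁ hodd]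

/-- Expand `J (2x) (2y) (2z) = 2 J x y z` by doubling one variable at a time; joint oddness of
`J` leaves the four values `J (±x) (±y) (±z)` with at most one sign flipped. -/
theorem thirdCauchyDefect_sign_relation (hg : MixedEq g) (hodd : g.Odd) (x y z : X) :
    (59 : ℝ) • thirdCauchyDefect g x y z = (63 : ℝ) • (thirdCauchyDefect g (-x) y z
      + thirdCauchyDefect g x (-y) z + thirdCauchyDefect g x y (-z)) := by
  have h := thirdCauchyDefect_two_smul (hg.map_two_smul_of_odd hodd) x y z
  simp only [hg.thirdCauchyDefect_two_smul₀ hodd, hg.thirdCauchyDefect_two_smul₁ hodd,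
    hg.thirdCauchyDefect_two_smul₂ hodd] at h
  have hneg := thirdCauchyDefect_neg hodd
  have h₁ := hneg x y (-z)
  have h₂ := hneg x (-y) z
  have h₃ := hneg (-x) y z
  simp only [neg_neg] at h₁ h₂ h₃
  linear_combination (norm := module) (4 : ℝ) • h - (441 / 16 : ℝ) • (h₁ + h₂ + h₃)
    + (343 / 16 : ℝ) • hneg x y z

/-- The sign relation at `(x, y, z)` and at its three single sign flips is a linear system with
nonzero determinant. -/
theorem thirdCauchyDefect_eq_zero_of_odd (hg : MixedEq g) (hodd : g.Odd) (x y z : X) :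
    thirdCauchyDefect g x y z = 0 := by
  have hrel := hg.thirdCauchyDefect_sign_relation hodd
  have h₀ := hrel x y z
  have h₁ := hrel (-x) y z
  have h₂ := hrel x (-y) z
  have h₃ := hrel x y (-z)
  have hneg := thirdCauchyDefect_neg hodd
  have o₁ := hneg x y (-z)
  have o₂ := hneg x (-y) z
  have o₃ := hneg (-x) y z
  simp only [neg_neg] at h₁ h₂ h₃ o₁ o₂ o₃
  linear_combination (norm := module) (-(1 : ℝ) / 992) •
    ((185 : ℝ) • h₀ + (63 : ℝ) • (h₁ + h₂ + h₃) + (7938 : ℝ) • (o₁ + o₂ + o₃))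

theorem map_add_of_odd (hg : MixedEq g) (hodd : g.Odd) (x y : X) : g (x + y) = g x + g y := by
  have : IsAddTorsionFree Y := .of_isTorsionFree ℝ Y
  refine map_add_of_jensen hodd.map_zero (fun x y => ?_) x y
  have h := hg.thirdCauchyDefect_eq_zero_of_odd hodd x y (-y)
  simp only [thirdCauchyDefect, add_neg_cancel, ← sub_eq_add_neg, add_sub_cancel_right,
    hodd.eq, hodd.map_zero] at h
  linear_combination (norm := module) -h

end MixedEq

end MixedEquation

theorem solution_decomposition {X Y : Type*} [AddCommGroup X] [Module ℝ X]
    [AddCommGroup Y] [Module ℝ Y] (f : X → Y) (hf : MixedEq f) :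
    ∃ (B : X × X × X × X → Y) (A : X → Y),
      SymmetricMultiAdditive B ∧ (∀ x y : X, A (x + y) = A x + A y) ∧
      ∀ x : X, f x = B (x, x, x, x) + A x := by
  have hf' := hf.comp_neg
  obtain ⟨B, hB, hBq⟩ := ((hf.smul_add_smul hf' (2⁻¹ : ℝ) 2⁻¹).isQuartic_of_even fun x => by
    simp only [neg_neg, add_comm]).exists_symmetricMultiAdditive
  refine ⟨B, fun x => (2⁻¹ : ℝ) • f x + (-2⁻¹ : ℝ) • f (-x), hB,
    (hf.smul_add_smul hf' (2⁻¹ : ℝ) (-2⁻¹)).map_add_of_odd fun x => ?_, fun x => ?_⟩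
  · simp only [neg_neg]
    module
  · rw [hBq]
    module
end

section
/- Let X and Y be real vector spaces, let B : X × X × X × X → Y be a symmetric multi-additive function (additive in each variable separately and invariant under permutations of its arguments), and let A : X → Y be additive. Then the function f defined by f(x) = B(x,x,x,x) + A(x) satisfies the functional equation f(2x+y) + f(2x-y) = 4(f(x+y) + f(x-y)) - (3/7)(f(2y) - 2f(y)) + 2f(2x) - 8f(x) for all x, y in X. -/
theorem decomposition_is_solution {X Y : Type*} [AddCommGroup X] [Module ℝ X]
    [AddCommGroup Y] [Module ℝ Y] (B : X × X × X × X → Y) (A : X → Y)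
    (hB : SymmetricMultiAdditive B) (hA : ∀ x y : X, A (x + y) = A x + A y) :
    MixedEq (fun x : X => B (x, x, x, x) + A x) := by
  obtain ⟨h1, h2, h3, h4, -⟩ := hB
  have h01 : ∀ b c d : X, B (0, b, c, d) = 0 := by
    intro b c d
    have h := h1 0 0 b c d
    rw [add_zero] at h
    exact left_eq_add.mp h
  have h02 : ∀ a c d : X, B (a, 0, c, d) = 0 := by
    intro a c d
    have h := h2 a 0 0 c d
    rw [add_zero] at h
    exact left_eq_add.mp h
  have h03 : ∀ a b d : X, B (a, b, 0, d) = 0 := by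
    intro a b d
    have h := h3 a b 0 0 d
    rw [add_zero] at h
    exact left_eq_add.mp h
  have h04 : ∀ a b c : X, B (a, b, c, 0) = 0 := by
    intro a b c
    have h := h4 a b c 0 0
    rw [add_zero] at h
    exact left_eq_add.mp h
  have n1 : ∀ a b c d : X, B (-a, b, c, d) = -B (a, b, c, d) := by
    intro a b c d
    have h := h1 a (-a) b c d
    rw [add_neg_cancel, h01] at h
    exact eq_neg_of_add_eq_zero_right h.symm
  have n2 : ∀ a b c d : X, B (a, -b, c, d) = -B (a, b, c, d) := by
    intro a b c d
    have h := h2 a b (-b) c d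
    rw [add_neg_cancel, h02] at h
    exact eq_neg_of_add_eq_zero_right h.symm
  have n3 : ∀ a b c d : X, B (a, b, -c, d) = -B (a, b, c, d) := by
    intro a b c d
    have h := h3 a b c (-c) d
    rw [add_neg_cancel, h03] at h
    exact eq_neg_of_add_eq_zero_right h.symm
  have n4 : ∀ a b c d : X, B (a, b, c, -d) = -B (a, b, c, d) := by
    intro a b c d
    have h := h4 a b c d (-d)
    rw [add_neg_cancel, h04] at h
    exact eq_neg_of_add_eq_zero_right h.symm
  have s1 : ∀ a a' b c d : X, B (a - a', b, c, d) = B (a, b, c, d) - B (a', b, c, d) := by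
    intro a a' b c d; rw [sub_eq_add_neg, h1, n1, sub_eq_add_neg]
  have s2 : ∀ a b b' c d : X, B (a, b - b', c, d) = B (a, b, c, d) - B (a, b', c, d) := by
    intro a b b' c d; rw [sub_eq_add_neg, h2, n2, sub_eq_add_neg]
  have s3 : ∀ a b c c' d : X, B (a, b, c - c', d) = B (a, b, c, d) - B (a, b, c', d) := by
    intro a b c c' d; rw [sub_eq_add_neg, h3, n3, sub_eq_add_neg]
  have s4 : ∀ a b c d d' : X, B (a, b, c, d - d') = B (a, b, c, d) - B (a, b, c, d') := by
    intro a b c d d'; rw [sub_eq_add_neg, h4, n4, sub_eq_add_neg]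
  have hA0 : A 0 = 0 := by
    have h := hA 0 0
    rw [add_zero] at h
    exact left_eq_add.mp h
  have hAn : ∀ x : X, A (-x) = -A x := by
    intro x
    have h := hA x (-x)
    rw [add_neg_cancel, hA0] at h
    exact eq_neg_of_add_eq_zero_right h.symm
  have hAs : ∀ x y : X, A (x - y) = A x - A y := by
    intro x y; rw [sub_eq_add_neg, hA, hAn, sub_eq_add_neg]
  intro x y
  simp only [two_smul]
  simp only [s1, s2, s3, s4, h1, h2, h3, h4, hA, hAs]
  module
end

section
/- Let X and Y be real vector spaces and let f : X → Y be an odd function satisfying the functional equation f(2x+y) + f(2x-y) = 4(f(x+y) + f(x-y)) - (3/7)(f(2y) - 2f(y)) + 2f(2x) - 8f(x) for all x, y in X. Then f(2y) = 2 f(y) for all y in X, and consequently f satisfies f(2x+y) + f(2x-y) = 4(f(x+y) + f(x-y)) - 4f(x) for all x, y in X. -/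
/-!
Putting `x = 0` in the mixed equation, oddness cancels every term except
`(3/7)(f(2y) - 2f(y))`, which therefore vanishes. Substituting `f(2x) = 2f(x)` back, the terms
`2f(2x) - 8f(x)` collapse to `-4f(x)`.
-/

theorem MixedEq.map_two_smul_of_odd_s7 {X Y : Type*} [AddCommGroup X] [Module ℝ X]
    [AddCommGroup Y] [Module ℝ Y] {f : X → Y} (hf : MixedEq f) (hodd : f.Odd) (y : X) :
    f ((2 : ℝ) • y) = (2 : ℝ) • f y := by
  have : IsAddTorsionFree Y := .of_isTorsionFree ℝ Y
  have h := hf 0 y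
  simp only [smul_zero, zero_add, zero_sub, hodd y, hodd.map_zero, add_neg_cancel] at h
  have hdiff : ((3 : ℝ) / 7) • (f ((2 : ℝ) • y) - (2 : ℝ) • f y) = 0 := by
    simpa using h.symm
  rw [smul_eq_zero] at hdiff
  exact sub_eq_zero.mp (hdiff.resolve_left (by norm_num))

theorem odd_solution_doubling {X Y : Type*} [AddCommGroup X] [Module ℝ X]
    [AddCommGroup Y] [Module ℝ Y] (f : X → Y)
    (hodd : ∀ x : X, f (-x) = -f x) (hf : MixedEq f) :
    (∀ y : X, f ((2 : ℝ) • y) = (2 : ℝ) • f y) ∧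
    ∀ x y : X, f ((2 : ℝ) • x + y) + f ((2 : ℝ) • x - y) =
      (4 : ℝ) • (f (x + y) + f (x - y)) - (4 : ℝ) • f x := by
  have hdouble := hf.map_two_smul_of_odd_s7 hodd
  refine ⟨hdouble, fun x y => ?_⟩
  rw [hf x y, hdouble, hdouble]
  module
end
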